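/- Under the setup Σ' = pΣ + VᵀDV with Σ, D positive definite, p ∈ (0,1): for any v ∈ ℝ^d with V Σ⁻¹ v ≠ 0, the quadratic form satisfies (√p v)ᵀ (Σ')⁻¹ (√p v) < vᵀ Σ⁻¹ v. -/

import Mathlib

/-!
With `y = Σ⁻¹ v` and `z = (pΣ + VᵀDV)⁻¹ (√p v)`, completing the square gives
`vᵀΣ⁻¹v - (√p v)ᵀ(Σ')⁻¹(√p v) = (y - √p z)ᵀ Σ (y - √p z) + (Vz)ᵀ D (Vz)`.
Both terms are nonnegative, and they cannot both vanish: that would force `Vz = 0` and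
`y = √p z`, hence `V Σ⁻¹ v = 0`. Replacing `Σ` by `pΣ` absorbs the factor `p`, so the
argument is carried out for `A + VᵀDV` with an arbitrary positive definite `A`.
-/

open Matrix

lemma Matrix.IsSymm.dotProduct_mulVec_comm {n R : Type*} [Fintype n] [CommSemiring R]
    {A : Matrix n n R} (hA : A.IsSymm) (a b : n → R) :
    a ⬝ᵥ (A *ᵥ b) = b ⬝ᵥ (A *ᵥ a) := by
  rw [dotProduct_mulVec, ← mulVec_transpose, hA.eq, dotProduct_comm]

lemma dotProduct_sub_dotProduct_eq_of_mulVec_eq {n R : Type*} [Fintype n] [CommRing R]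
    {A B : Matrix n n R} (hA : A.IsSymm) {v y z : n → R}
    (hy : A *ᵥ y = v) (hz : (A + B) *ᵥ z = v) :
    v ⬝ᵥ y - v ⬝ᵥ z = (y - z) ⬝ᵥ (A *ᵥ (y - z)) + z ⬝ᵥ (B *ᵥ z) := by
  have hAz : A *ᵥ z = v - B *ᵥ z := by rw [← hz, add_mulVec]; abel
  have hvz : v ⬝ᵥ z = y ⬝ᵥ (A *ᵥ z) := by
    rw [hA.dotProduct_mulVec_comm, hy, dotProduct_comm]
  rw [hvz, mulVec_sub, hy, hAz]
  simp only [dotProduct_sub, sub_dotProduct, dotProduct_comm y v]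
  ring

lemma dotProduct_transpose_mul_mul_mulVec {n m R : Type*} [Fintype n] [Fintype m]
    [CommSemiring R] (D : Matrix m m R) (V : Matrix m n R) (z : n → R) :
    z ⬝ᵥ ((Vᵀ * D * V) *ᵥ z) = (V *ᵥ z) ⬝ᵥ (D *ᵥ (V *ᵥ z)) := by
  rw [← mulVec_mulVec, ← mulVec_mulVec, dotProduct_mulVec, vecMul_transpose]

section PosDef

variable {n : Type*} [Fintype n] [DecidableEq n] {A : Matrix n n ℝ}

lemma Matrix.PosDef.mulVec_inv_mulVec (hA : A.PosDef) (v : n → ℝ) :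
    A *ᵥ (A⁻¹ *ᵥ v) = v := by
  rw [mulVec_mulVec, mul_nonsing_inv _ (A.isUnit_iff_isUnit_det.mp hA.isUnit), one_mulVec]

lemma Matrix.PosDef.inv_smul_mulVec_sqrt_smul (hA : A.PosDef) {p : ℝ} (hp : 0 < p)
    (v : n → ℝ) :
    (p • A)⁻¹ *ᵥ (Real.sqrt p • v) = (Real.sqrt p)⁻¹ • (A⁻¹ *ᵥ v) := by
  have := invertibleOfNonzero hp.ne'
  rw [inv_smul A p (A.isUnit_iff_isUnit_det.mp hA.isUnit), invOf_eq_inv, smul_mulVec,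
    mulVec_smul, smul_smul]
  congr 1
  have hs : Real.sqrt p ≠ 0 := (Real.sqrt_pos.mpr hp).ne'
  field_simp
  exact Real.sq_sqrt hp.le

theorem Matrix.PosDef.dotProduct_inv_add_transpose_mul_mul_lt {m : Type*} [Fintype m]
    {D : Matrix m m ℝ} (hA : A.PosDef) (hD : D.PosDef) (V : Matrix m n ℝ) {v : n → ℝ}
    (hv : V *ᵥ (A⁻¹ *ᵥ v) ≠ 0) :
    v ⬝ᵥ ((A + Vᵀ * D * V)⁻¹ *ᵥ v) < v ⬝ᵥ (A⁻¹ *ᵥ v) := by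
  have hVDV : (Vᵀ * D * V).PosSemidef := by
    simpa [conjTranspose_eq_transpose_of_trivial] using
      hD.posSemidef.conjTranspose_mul_mul_same V
  set y := A⁻¹ *ᵥ v
  set z := (A + Vᵀ * D * V)⁻¹ *ᵥ v
  rw [← sub_pos, dotProduct_sub_dotProduct_eq_of_mulVec_eq
    (isHermitian_iff_isSymm.mp hA.isHermitian) (hA.mulVec_inv_mulVec v)
    ((hA.add_posSemidef hVDV).mulVec_inv_mulVec v), dotProduct_transpose_mul_mul_mulVec]
  by_cases hVz : V *ᵥ z = 0
  · have hyz : y - z ≠ 0 := fun h => hv (by rwa [sub_eq_zero.mp h])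
    exact add_pos_of_pos_of_nonneg
      (by simpa only [star_trivial] using hA.dotProduct_mulVec_pos hyz)
      (by simpa only [star_trivial] using hD.posSemidef.dotProduct_mulVec_nonneg (V *ᵥ z))
  · exact add_pos_of_nonneg_of_pos
      (by simpa only [star_trivial] using hA.posSemidef.dotProduct_mulVec_nonneg (y - z))
      (by simpa only [star_trivial] using hD.dotProduct_mulVec_pos hVz)

end PosDef

/-- Strict decrease of the quadratic form under thinning. -/
theorem thinned_quadratic_form_strict_lt {K d : ℕ}
    (Sg : Matrix (Fin d) (Fin d) ℝ) (D : Matrix (Fin K) (Fin K) ℝ)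
    (V : Matrix (Fin K) (Fin d) ℝ)
    (hSg : Sg.PosDef) (hD : D.PosDef)
    (p : ℝ) (hp : p ∈ Set.Ioo (0 : ℝ) 1)
    (Sgg : Matrix (Fin d) (Fin d) ℝ) (hSgg : Sgg = p • Sg + Vᵀ * D * V)
    (v : Fin d → ℝ) (hx : V *ᵥ (Sg⁻¹ *ᵥ v) ≠ 0) :
    (Real.sqrt p • v) ⬝ᵥ (Sgg⁻¹ *ᵥ (Real.sqrt p • v)) < v ⬝ᵥ (Sg⁻¹ *ᵥ v) := by
  have hs : Real.sqrt p ≠ 0 := (Real.sqrt_pos.mpr hp.1).ne'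
  have hscaled := hSg.inv_smul_mulVec_sqrt_smul hp.1 v
  have hlt := (hSg.smul hp.1).dotProduct_inv_add_transpose_mul_mul_lt hD V
    (v := Real.sqrt p • v)
    (by rwa [hscaled, mulVec_smul, smul_ne_zero_iff_right (inv_ne_zero hs)])
  rwa [← hSgg, hscaled, dotProduct_smul, smul_dotProduct (Real.sqrt p) v (Sg⁻¹ *ᵥ v),
    smul_eq_mul, smul_eq_mul, inv_mul_cancel_left₀ hs] at hlt
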